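/- Let F : ℝ → ℝ be four times continuously differentiable and suppose that 𝓑(F)(z) = 0 for every z ∈ ℝ. Then (1/4)F''''(z) − (5/4)F''(z) + F(z) = 1 for every z ∈ ℝ. -/

import Mathlib

/-!
Differentiating gives `(𝓑 F)' = 2 F' (L F - 1)` with `L F = (1/4)F'''' - (5/4)F'' + F` (`Lop`),
so `𝓑 F ≡ 0` forces `F' (L F - 1) ≡ 0`. If `L F z ≠ 1`, then `L F ≠ 1` near `z` by continuity, so
`F' ≡ 0` near `z`: all higher derivatives of `F` vanish at `z` and `𝓑 F z = (F z - 1)^2`.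
Hence `F z = 1` and `L F z = 1` after all.
-/

open Real

/-- The quadratic third-order operator
`𝓑(F) = (−(1/2)F'' + (3/2)F' + F − 1)·((1/2)F'' − (3/2)F' + F − 1)
        + F'·((1/2)F''' − (3/2)F'' + F')`. -/
noncomputable def Bop (F : ℝ → ℝ) (z : ℝ) : ℝ :=
  (-(1/2) * iteratedDeriv 2 F z + (3/2) * deriv F z + F z - 1) *
      ((1/2) * iteratedDeriv 2 F z - (3/2) * deriv F z + F z - 1)
    + deriv F z * ((1/2) * iteratedDeriv 3 F z - (3/2) * iteratedDeriv 2 F z + deriv F z)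

open Filter Topology

noncomputable def Lop (F : ℝ → ℝ) (z : ℝ) : ℝ :=
  (1/4) * iteratedDeriv 4 F z - (5/4) * iteratedDeriv 2 F z + F z

section IteratedDeriv

variable {𝕜 E : Type*} [NontriviallyNormedField 𝕜] [NormedAddCommGroup E] [NormedSpace 𝕜 E]
  {f : 𝕜 → E}

theorem ContDiff.hasDerivAt_iteratedDeriv {n : WithTop ℕ∞} {k : ℕ} (hf : ContDiff 𝕜 n f)
    (hk : k < n) (x : 𝕜) : HasDerivAt (iteratedDeriv k f) (iteratedDeriv (k + 1) f x) x := by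
  rw [iteratedDeriv_succ]
  exact (hf.differentiable_iteratedDeriv k hk x).hasDerivAt

theorem iteratedDeriv_succ_eq_zero_of_deriv_eventuallyEq_zero {x : 𝕜} (h : deriv f =ᶠ[𝓝 x] 0)
    (k : ℕ) : iteratedDeriv (k + 1) f x = 0 := by
  rw [iteratedDeriv_succ', (h.iteratedDeriv k).eq_of_nhds]
  simp

end IteratedDeriv

variable {F : ℝ → ℝ}

theorem continuous_Lop (hF : ContDiff ℝ 4 F) : Continuous (Lop F) := by
  have h4 := hF.continuous_iteratedDeriv 4 le_rfl
  have h2 := hF.continuous_iteratedDeriv 2 (by norm_num)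
  unfold Lop
  fun_prop

theorem hasDerivAt_Bop (hF : ContDiff ℝ 4 F) (z : ℝ) :
    HasDerivAt (Bop F) (2 * deriv F z * (Lop F z - 1)) z := by
  have d0 : HasDerivAt F (deriv F z) z := by
    simpa using hF.hasDerivAt_iteratedDeriv (k := 0) (by norm_num) z
  have d1 : HasDerivAt (deriv F) (iteratedDeriv 2 F z) z := by
    simpa using hF.hasDerivAt_iteratedDeriv (k := 1) (by norm_num) z
  have d2 := hF.hasDerivAt_iteratedDeriv (k := 2) (by norm_num) z
  have d3 := hF.hasDerivAt_iteratedDeriv (k := 3) (by norm_num) z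
  have hB := ((((((d2.const_mul (-(1/2) : ℝ)).add (d1.const_mul (3/2 : ℝ))).add d0).sub_const 1).mul
    ((((d2.const_mul (1/2 : ℝ)).sub (d1.const_mul (3/2 : ℝ))).add d0).sub_const 1)).add
    (d1.mul (((d3.const_mul (1/2 : ℝ)).sub (d2.const_mul (3/2 : ℝ))).add d1)))
  refine hB.congr_deriv ?_
  simp only [Lop, Pi.add_apply, Pi.sub_apply]
  ring

theorem deriv_mul_Lop_sub_one_eq_zero (hF : ContDiff ℝ 4 F) (hB : ∀ z, Bop F z = 0) (z : ℝ) :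
    deriv F z * (Lop F z - 1) = 0 := by
  have h0 : HasDerivAt (Bop F) 0 z := by
    rw [show Bop F = fun _ ↦ 0 from funext hB]
    exact hasDerivAt_const z 0
  linear_combination (1/2) * (hasDerivAt_Bop hF z).unique h0

theorem Lop_eq_one_of_deriv_eventuallyEq_zero {z : ℝ} (hd : deriv F =ᶠ[𝓝 z] 0)
    (hB : Bop F z = 0) : Lop F z = 1 := by
  have h1 : deriv F z = 0 := hd.eq_of_nhds
  have h2 := iteratedDeriv_succ_eq_zero_of_deriv_eventuallyEq_zero hd 1
  have h3 := iteratedDeriv_succ_eq_zero_of_deriv_eventuallyEq_zero hd 2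
  have h4 := iteratedDeriv_succ_eq_zero_of_deriv_eventuallyEq_zero hd 3
  have hFz : F z = 1 := by
    rw [Bop, h1, h2, h3] at hB
    have hsq : (F z - 1) ^ 2 = 0 := by linear_combination hB
    exact sub_eq_zero.1 (pow_eq_zero_iff two_ne_zero |>.1 hsq)
  rw [Lop, h2, h4, hFz]
  norm_num

/-- if `𝓑(F) ≡ 0` then `(1/4)F'''' − (5/4)F'' + F ≡ 1`. -/
theorem Bop_eq_zero_implies_linear_ode (F : ℝ → ℝ) (hF : ContDiff ℝ 4 F)
    (hB : ∀ z : ℝ, Bop F z = 0) :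
    ∀ z : ℝ, (1/4) * iteratedDeriv 4 F z - (5/4) * iteratedDeriv 2 F z + F z = 1 := by
  intro z
  by_contra hne
  have hU : ∀ᶠ w in 𝓝 z, Lop F w ≠ 1 := (continuous_Lop hF).continuousAt.eventually_ne hne
  have hd : deriv F =ᶠ[𝓝 z] 0 := hU.mono fun w hw ↦
    (mul_eq_zero.1 (deriv_mul_Lop_sub_one_eq_zero hF hB w)).resolve_right (sub_ne_zero.2 hw)
  exact hne (Lop_eq_one_of_deriv_eventuallyEq_zero hd (hB z))
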